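/- arXiv:1405.0707 — 2 statements merged into one kernel-verified Lean document; each statement's English description precedes it below -/
import Mathlib

section
/- Collinearity of shifted block FOM residuals: assume the block Arnoldi relation (A - τI)V_m = V_m(H_m - τI) + V_{m+1} H_{m+1,m} E_m^T holds, the previous residual satisfies R⁰ = V₁·R̂ with V₁ the first block of V_m, and Z solves (H_m - τI)Z = E₁·R̂. Then the new residual R = R⁰ - (A - τI)·V_m·Z equals -V_{m+1}·(H_{m+1,m}·E_m^T·Z); in particular R lies in the column span of V_{m+1}. -/
/-! The Arnoldi relation turns `(A - τI) V_m Z` into `V_m (H_m - τI) Z + V_{m+1} H_{m+1,m} E_mᵀ Z`,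
and the Galerkin condition `(H_m - τI) Z = E₁ R̂` makes the first term cancel `R⁰ = V_m E₁ R̂`
exactly, leaving only the `V_{m+1}` term. -/

namespace Matrix

variable {R l m p : Type*}

theorem col_mul_mem_span_range_col [CommSemiring R] [Fintype m] (M : Matrix l m R)
    (N : Matrix m p R) (j : p) : (M * N).col j ∈ Submodule.span R (Set.range M.col) := by
  rw [← range_mulVecLin]
  exact ⟨N.col j, rfl⟩

theorem arnoldi_residual_eq [Ring R] [Fintype l] [Fintype m] [Fintype p]
    {B : Matrix l l R} {V : Matrix l m R} {W : Matrix l p R} {H : Matrix m m R}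
    {G : Matrix p p R} {C : Matrix p m R} {E : Matrix m p R} {S : Matrix p p R}
    {R₀ : Matrix l p R} {Z : Matrix m p R}
    (hArnoldi : B * V = V * H + W * G * C) (hR₀ : R₀ = V * E * S) (hZ : H * Z = E * S) :
    R₀ - B * (V * Z) = -(W * (G * (C * Z))) := by
  rw [hR₀, ← Matrix.mul_assoc, hArnoldi]
  simp only [Matrix.add_mul, Matrix.mul_assoc, hZ]
  abel

end Matrix

theorem stmt4_general (n m p : ℕ) (A : Matrix (Fin n) (Fin n) ℂ) (τ : ℂ)
    (Vm : Matrix (Fin n) (Fin (m * p)) ℂ) (Vnext : Matrix (Fin n) (Fin p) ℂ)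
    (Hm : Matrix (Fin (m * p)) (Fin (m * p)) ℂ) (Hnm : Matrix (Fin p) (Fin p) ℂ)
    (E₁ Em : Matrix (Fin (m * p)) (Fin p) ℂ)
    (Rhat : Matrix (Fin p) (Fin p) ℂ) (R0 : Matrix (Fin n) (Fin p) ℂ) (Z : Matrix (Fin (m * p)) (Fin p) ℂ)
    (hArnoldi : (A - τ • (1 : Matrix (Fin n) (Fin n) ℂ)) * Vm =
      Vm * (Hm - τ • (1 : Matrix (Fin (m * p)) (Fin (m * p)) ℂ)) + Vnext * Hnm * Em.transpose)
    (hR0 : R0 = (Vm * E₁) * Rhat)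
    (hZ : (Hm - τ • (1 : Matrix (Fin (m * p)) (Fin (m * p)) ℂ)) * Z = E₁ * Rhat) :
    R0 - (A - τ • (1 : Matrix (Fin n) (Fin n) ℂ)) * (Vm * Z) =
        -(Vnext * (Hnm * (Em.transpose * Z))) ∧
      ∀ j : Fin p,
        (fun r => (R0 - (A - τ • (1 : Matrix (Fin n) (Fin n) ℂ)) * (Vm * Z)) r j) ∈
          Submodule.span ℂ (Set.range fun k : Fin p => fun r => Vnext r k) := by
  have hR := Matrix.arnoldi_residual_eq hArnoldi hR0 hZ
  refine ⟨hR, fun j => ?_⟩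
  rw [hR, ← Matrix.mul_neg]
  exact Vnext.col_mul_mem_span_range_col _ j

/-- Collinearity of shifted block FOM residuals: if the shifted block Arnoldi relation holds,
`R0 = V₁·Rhat` with `V₁ = V_m·E₁`, and `Z` solves `(H_m - τI)Z = E₁·Rhat`, then the new residual
`R = R0 - (A - τI)·V_m·Z` equals `-V_{m+1}·(H_{m+1,m}·E_mᵀ·Z)`; in particular every column of
`R` lies in the column span of `V_{m+1}`. -/
theorem stmt4 (n m p : ℕ) (A : Matrix (Fin n) (Fin n) ℂ) (τ : ℂ)
    (Vm : Matrix (Fin n) (Fin (m * p)) ℂ) (Vnext : Matrix (Fin n) (Fin p) ℂ)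
    (Hm : Matrix (Fin (m * p)) (Fin (m * p)) ℂ) (Hnm : Matrix (Fin p) (Fin p) ℂ)
    (E₁ Em : Matrix (Fin (m * p)) (Fin p) ℂ)
    (hE₁ : E₁ = Matrix.of fun (i : Fin (m * p)) (j : Fin p) => if (i : ℕ) = (j : ℕ) then (1 : ℂ) else 0)
    (hEm : Em = Matrix.of fun (i : Fin (m * p)) (j : Fin p) => if (i : ℕ) = (m - 1) * p + (j : ℕ) then (1 : ℂ) else 0)
    (Rhat : Matrix (Fin p) (Fin p) ℂ) (R0 : Matrix (Fin n) (Fin p) ℂ) (Z : Matrix (Fin (m * p)) (Fin p) ℂ)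
    (hArnoldi : (A - τ • (1 : Matrix (Fin n) (Fin n) ℂ)) * Vm =
      Vm * (Hm - τ • (1 : Matrix (Fin (m * p)) (Fin (m * p)) ℂ)) + Vnext * Hnm * Em.transpose)
    (hunit : IsUnit (Hm - τ • (1 : Matrix (Fin (m * p)) (Fin (m * p)) ℂ)))
    (hR0 : R0 = (Vm * E₁) * Rhat)
    (hZ : (Hm - τ • (1 : Matrix (Fin (m * p)) (Fin (m * p)) ℂ)) * Z = E₁ * Rhat) :
    R0 - (A - τ • (1 : Matrix (Fin n) (Fin n) ℂ)) * (Vm * Z) =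
        -(Vnext * (Hnm * (Em.transpose * Z))) ∧
      ∀ j : Fin p,
        (fun r => (R0 - (A - τ • (1 : Matrix (Fin n) (Fin n) ℂ)) * (Vm * Z)) r j) ∈
          Submodule.span ℂ (Set.range fun k : Fin p => fun r => Vnext r k) :=
  stmt4_general n m p A τ Vm Vnext Hm Hnm E₁ Em Rhat R0 Z hArnoldi hR0 hZ
end

section
/- Residual expansion in Ritz residuals (Theorem 4.2): suppose A⁻¹V_m = V_m H_m + V_{m+1}H_{m+1,m}E_m^T and H_m = PΛP^{-1} with Λ = diag(μ₁,…,μ_{mp}) and P = [y₁,…,y_{mp}]. Let r_j = A⁻¹V_m y_j - μ_j V_m y_j be the Ritz residuals, and let R = τ·V_{m+1}H_{m+1,m}E_m^T(I - τH_m)^{-1}E₁R̂ be the preconditioned shifted block FOM residual, where I - τH_m is invertible. Then R = τ·[r₁, …, r_{mp}]·(P(I - τΛ))^{-1}·E₁R̂. -/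
/-!
Substituting the Arnoldi relation shows that the Ritz residual matrix `A⁻¹V_mP - V_mPΛ` equals
`V_{m+1}H_{m+1,m}E_mᵀP`. Since `H_mP = PΛ`, also `(I - τH_m)P = P(I - τΛ)`, so
`(I - τH_m)⁻¹ = P(P(I - τΛ))⁻¹`, and inserting this into the FOM residual gives the expansion.
-/

namespace Matrix

variable {n α : Type*} [Fintype n] [DecidableEq n] [CommRing α]

theorem inv_eq_mul_inv_of_mul_eq_mul {X P Y : Matrix n n α} (hP : IsUnit P)
    (h : X * P = P * Y) : X⁻¹ = P * (P * Y)⁻¹ := by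
  have hPdet : IsUnit P.det := (isUnit_iff_isUnit_det P).mp hP
  have hX : X = P * Y * P⁻¹ := by rw [← h, mul_nonsing_inv_cancel_right _ _ hPdet]
  rw [hX, mul_inv_rev, nonsing_inv_nonsing_inv _ hPdet]

theorem one_sub_smul_mul_eq_mul_one_sub_smul {H P Λ : Matrix n n α} (τ : α)
    (h : H * P = P * Λ) : (1 - τ • H) * P = P * (1 - τ • Λ) := by
  rw [Matrix.sub_mul, Matrix.mul_sub, Matrix.one_mul, Matrix.mul_one, Matrix.smul_mul,
    Matrix.mul_smul, h]

end Matrix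

theorem ritz_residuals_eq {n k l α : Type*} [Fintype n] [Fintype k] [Fintype l] [Ring α]
    {B : Matrix n n α} {V F : Matrix n k α} {H : Matrix k k α} {P : Matrix k l α}
    {Λ : Matrix l l α} (hV : B * V = V * H + F) (hHP : H * P = P * Λ) :
    B * V * P - V * P * Λ = F * P := by
  rw [hV, Matrix.add_mul, Matrix.mul_assoc V H P, hHP, ← Matrix.mul_assoc]
  abel

theorem stmt12_general (n m p : ℕ) (A : Matrix (Fin n) (Fin n) ℂ) (τ : ℂ)
    (Vm : Matrix (Fin n) (Fin (m * p)) ℂ) (Vnext : Matrix (Fin n) (Fin p) ℂ)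
    (Hm P : Matrix (Fin (m * p)) (Fin (m * p)) ℂ) (Hnm : Matrix (Fin p) (Fin p) ℂ)
    (E₁ Em : Matrix (Fin (m * p)) (Fin p) ℂ)
    (Rhat : Matrix (Fin p) (Fin p) ℂ)
    (Λ : Matrix (Fin (m * p)) (Fin (m * p)) ℂ)
    (hP : IsUnit P)
    (hdiag : Hm * P = P * Λ)
    (hArnoldi : A⁻¹ * Vm = Vm * Hm + Vnext * Hnm * Em.transpose)
    (Rmat : Matrix (Fin n) (Fin (m * p)) ℂ)
    (hRmat : Rmat = A⁻¹ * Vm * P - Vm * P * Λ)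
    (R : Matrix (Fin n) (Fin p) ℂ)
    (hR : R = τ • (Vnext * (Hnm * (Em.transpose *
      (((1 : Matrix (Fin (m * p)) (Fin (m * p)) ℂ) - τ • Hm)⁻¹ * (E₁ * Rhat)))))) :
    R = τ • (Rmat *
      ((P * ((1 : Matrix (Fin (m * p)) (Fin (m * p)) ℂ) - τ • Λ))⁻¹ * (E₁ * Rhat))) := by
  rw [hR, hRmat, ritz_residuals_eq hArnoldi hdiag,
    Matrix.inv_eq_mul_inv_of_mul_eq_mul hP
      (Matrix.one_sub_smul_mul_eq_mul_one_sub_smul τ hdiag)]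
  simp only [Matrix.mul_assoc]

/-- Residual expansion in Ritz residuals (Theorem 4.2): if
`A⁻¹V_m = V_m H_m + V_{m+1}H_{m+1,m}E_mᵀ`, `H_m = PΛP⁻¹` with `Λ` diagonal (so `H_mP = PΛ`),
the matrix of Ritz residuals is `Rmat = A⁻¹V_mP - V_mPΛ` (whose columns are the `r_j`), and
`R = τ·V_{m+1}H_{m+1,m}E_mᵀ(I - τH_m)⁻¹E₁Rhat`, then `R = τ·Rmat·(P(I - τΛ))⁻¹·E₁Rhat`. -/
theorem stmt12 (n m p : ℕ) (A : Matrix (Fin n) (Fin n) ℂ) (hA : IsUnit A) (τ : ℂ)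
    (Vm : Matrix (Fin n) (Fin (m * p)) ℂ) (Vnext : Matrix (Fin n) (Fin p) ℂ)
    (Hm P : Matrix (Fin (m * p)) (Fin (m * p)) ℂ) (Hnm : Matrix (Fin p) (Fin p) ℂ)
    (E₁ Em : Matrix (Fin (m * p)) (Fin p) ℂ)
    (Rhat : Matrix (Fin p) (Fin p) ℂ)
    (μ : Fin (m * p) → ℂ) (Λ : Matrix (Fin (m * p)) (Fin (m * p)) ℂ)
    (hΛ : Λ = Matrix.diagonal μ)
    (hP : IsUnit P)
    (hdiag : Hm * P = P * Λ)
    (hArnoldi : A⁻¹ * Vm = Vm * Hm + Vnext * Hnm * Em.transpose)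
    (hHunit : IsUnit ((1 : Matrix (Fin (m * p)) (Fin (m * p)) ℂ) - τ • Hm))
    (hΛunit : IsUnit ((1 : Matrix (Fin (m * p)) (Fin (m * p)) ℂ) - τ • Λ))
    (Rmat : Matrix (Fin n) (Fin (m * p)) ℂ)
    (hRmat : Rmat = A⁻¹ * Vm * P - Vm * P * Λ)
    (R : Matrix (Fin n) (Fin p) ℂ)
    (hR : R = τ • (Vnext * (Hnm * (Em.transpose *
      (((1 : Matrix (Fin (m * p)) (Fin (m * p)) ℂ) - τ • Hm)⁻¹ * (E₁ * Rhat)))))) :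
    R = τ • (Rmat *
      ((P * ((1 : Matrix (Fin (m * p)) (Fin (m * p)) ℂ) - τ • Λ))⁻¹ * (E₁ * Rhat))) :=
  stmt12_general n m p A τ Vm Vnext Hm P Hnm E₁ Em Rhat Λ hP hdiag hArnoldi Rmat hRmat R hR
end
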